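/- For every positive integer k, the star K_{1,3k−1} (one center joined to 3k−1 leaves) satisfies bg(K_{1,3k−1}) = 2k − 1 and b̂g(K_{1,3k−1}) = 2k. -/

import Mathlib

open Classical

namespace BrushGame

variable {V : Type*}

/-- The number of neighbours of `x` in `G` that belong to the list `l`. -/
noncomputable def nbr [Fintype V] (G : SimpleGraph V) (x : V) (l : List V) : ℕ :=
  (Finset.univ.filter (fun u => G.Adj x u ∧ u ∈ l)).card

/-- The degree of `x` in `G`. -/
noncomputable def deg [Fintype V] (G : SimpleGraph V) (x : V) : ℕ :=
  (Finset.univ.filter (fun u => G.Adj x u)).card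

/-- `l` is a valid sequence of vertex firings starting from the brush assignment `c`:
the vertices of `l` fire in order; when a vertex fires, the number of brushes on it
(those from `c` plus one from each previously fired neighbour) is at least its number of
still-dirty neighbours. -/
def FiringSeq [Fintype V] (G : SimpleGraph V) (c : V → ℕ) (l : List V) : Prop :=
  l.Nodup ∧ ∀ i : Fin l.length,
    deg G (l.get i) ≤ c (l.get i) + 2 * nbr G (l.get i) (l.take i.1)

/-- Vertex `v` gets cleaned, starting from the assignment `c` of brushes. -/
def Cleaned [Fintype V] (G : SimpleGraph V) (c : V → ℕ) (v : V) : Prop :=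
  ∃ l, FiringSeq G c l ∧ v ∈ l

/-- All vertices are clean, i.e. the game is over. -/
def Over [Fintype V] (G : SimpleGraph V) (c : V → ℕ) : Prop := ∀ v, Cleaned G c v

/-- An upper bound on the number of turns of any brushing game on `G` (plus one). -/
noncomputable def fuel [Fintype V] (G : SimpleGraph V) : ℕ := (∑ v, deg G v) + 1

/-- The value (number of brushes placed from now on, under optimal play) of the brushing
game on `G` from the brush assignment `c`, with `n` turns of fuel remaining;
`mover = true` means that it is Min's turn to place a brush (on a dirty vertex),
`mover = false` that it is Max's turn.  The fuel never runs out along legal play when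
the game is started with fuel `fuel G`. -/
noncomputable def val [Fintype V] (G : SimpleGraph V) : Bool → ℕ → (V → ℕ) → ℕ
  | _, 0, _ => 0
  | mover, n + 1, c =>
    if Over G c then 0
    else if mover then
      1 + sInf {k | ∃ v, ¬ Cleaned G c v ∧ k = val G false n (Function.update c v (c v + 1))}
    else
      1 + sSup {k | ∃ v, ¬ Cleaned G c v ∧ k = val G true n (Function.update c v (c v + 1))}

/-- The game brush number of `G` starting from the initial configuration `f`, Min to move. -/
noncomputable def bgFrom [Fintype V] (G : SimpleGraph V) (f : V → ℕ) : ℕ :=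
  val G true (fuel G) f

/-- The game brush number of `G` starting from the initial configuration `f`, Max to move. -/
noncomputable def bghatFrom [Fintype V] (G : SimpleGraph V) (f : V → ℕ) : ℕ :=
  val G false (fuel G) f

/-- The (Min-start) game brush number of `G`. -/
noncomputable def bg [Fintype V] (G : SimpleGraph V) : ℕ := bgFrom G (fun _ => 0)

/-- The Max-start game brush number of `G`. -/
noncomputable def bghat [Fintype V] (G : SimpleGraph V) : ℕ := bghatFrom G (fun _ => 0)

/-- `G` can be cleaned by the configuration `f`. -/
def CleansBy [Fintype V] (G : SimpleGraph V) (f : V → ℕ) : Prop :=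
  ∃ l, FiringSeq G f l ∧ ∀ v : V, v ∈ l

/-- The brush number of `G`. -/
noncomputable def bNum [Fintype V] (G : SimpleGraph V) : ℕ :=
  sInf {k | ∃ f, CleansBy G f ∧ k = ∑ v, f v}

end BrushGame

/-! On the star `K_{1,n}` a position is summarised by its deficit
`r = n - (brushes on the centre + 2 · number of brushed leaves)`: a brushed leaf fires at once,
giving the centre a brush and losing it a dirty neighbour, so the centre fires exactly when
`r = 0`, and before that a leaf is clean iff it carries a brush. Each move therefore lowers `r`
by 1 (on the centre) or by 2 (on a dirty leaf), and the game is over when `r` reaches 0. By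
induction on `r`, the number of moves still to be played is `⌊(2r+1)/3⌋` with Min to move and
`⌊(2r+2)/3⌋` with Max to move; for `r = n = 3k - 1` these are `2k - 1` and `2k`. -/

namespace BrushGame

open Finset

section General

variable {V : Type*} {c : V → ℕ} {v : V}

noncomputable def addBrush (c : V → ℕ) (v : V) : V → ℕ := Function.update c v (c v + 1)

@[simp] theorem addBrush_self : addBrush c v v = c v + 1 := Function.update_self ..

theorem addBrush_of_ne {u : V} (h : u ≠ v) : addBrush c v u = c u := Function.update_of_ne h ..

variable [Fintype V] {G : SimpleGraph V} {l : List V}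

def moveValues (G : SimpleGraph V) (mover : Bool) (n : ℕ) (c : V → ℕ) : Set ℕ :=
  {k | ∃ v, ¬ Cleaned G c v ∧ k = val G mover n (addBrush c v)}

theorem val_succ_of_over (mover : Bool) (n : ℕ) (h : Over G c) : val G mover (n + 1) c = 0 := by
  rw [val, if_pos h]

theorem val_true_succ (n : ℕ) (h : ¬ Over G c) :
    val G true (n + 1) c = 1 + sInf (moveValues G false n c) := by
  rw [val, if_neg h, if_pos rfl]
  rfl

theorem val_false_succ (n : ℕ) (h : ¬ Over G c) :
    val G false (n + 1) c = 1 + sSup (moveValues G true n c) := by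
  rw [val, if_neg h]
  rfl

theorem deg_lt_fuel (v : V) : deg G v < fuel G :=
  Nat.lt_succ_of_le (single_le_sum (fun u _ => Nat.zero_le (deg G u)) (mem_univ v))

theorem FiringSeq.deg_le (h : FiringSeq G c l) {i : ℕ} (hi : i < l.length) :
    deg G l[i] ≤ c l[i] + 2 * nbr G l[i] (l.take i) := by
  simpa using h.2 ⟨i, hi⟩

theorem FiringSeq.deg_le_of_no_earlier_adj (h : FiringSeq G c l) {i : ℕ} (hi : i < l.length)
    (hadj : ∀ u ∈ l.take i, ¬ G.Adj l[i] u) : deg G l[i] ≤ c l[i] := by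
  have hnbr : nbr G l[i] (l.take i) = 0 := by
    rw [nbr, Finset.card_eq_zero, Finset.filter_eq_empty_iff]
    exact fun u _ ⟨hvu, hu⟩ => hadj u hu hvu
  simpa [hnbr] using h.deg_le hi

theorem FiringSeq.append_singleton (h : FiringSeq G c l) (hv : v ∉ l)
    (hfire : deg G v ≤ c v + 2 * nbr G v l) : FiringSeq G c (l ++ [v]) := by
  refine ⟨h.1.append (List.nodup_singleton v) (by simpa using hv), fun ⟨i, hi⟩ => ?_⟩
  simp only [List.length_append, List.length_singleton] at hi
  rcases Nat.lt_succ_iff_lt_or_eq.mp hi with hi | rfl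
  · simpa [List.getElem_append_left hi, List.take_append_of_le_length hi.le] using h.deg_le hi
  · simpa using hfire

theorem firingSeq_of_forall_deg_le (hl : l.Nodup) (hdeg : ∀ u ∈ l, deg G u ≤ c u) :
    FiringSeq G c l :=
  ⟨hl, fun i => (hdeg _ (List.get_mem l i)).trans (Nat.le_add_right _ _)⟩

theorem FiringSeq.take (h : FiringSeq G c l) (m : ℕ) : FiringSeq G c (l.take m) := by
  refine ⟨h.1.sublist (List.take_sublist m l), fun ⟨i, hi⟩ => ?_⟩
  rw [List.length_take, Nat.lt_min] at hi
  simpa [List.take_take, Nat.min_eq_left hi.1.le] using h.deg_le hi.2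

theorem FiringSeq.getElem_notMem_take (h : FiringSeq G c l) {i : ℕ} (hi : i < l.length) :
    l[i] ∉ l.take i := fun hmem =>
  List.disjoint_take_drop h.1 le_rfl hmem
    (by rw [List.drop_eq_getElem_cons hi]; exact List.mem_cons_self)

theorem cleaned_of_deg_le (h : deg G v ≤ c v) : Cleaned G c v :=
  ⟨[v], firingSeq_of_forall_deg_le (List.nodup_singleton v) (by simpa using h),
    List.mem_singleton_self v⟩

end General

section Star

variable {n : ℕ} {c : Fin 1 ⊕ Fin n → ℕ} {l : List (Fin 1 ⊕ Fin n)}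

abbrev star (n : ℕ) : SimpleGraph (Fin 1 ⊕ Fin n) := completeBipartiteGraph (Fin 1) (Fin n)

def center : Fin 1 ⊕ Fin n := .inl 0

@[simp] theorem isLeft_center : (center : Fin 1 ⊕ Fin n).isLeft := rfl

@[simp] theorem inl_eq_center (a : Fin 1) : (.inl a : Fin 1 ⊕ Fin n) = center := by
  rw [Subsingleton.elim a 0, center]

@[simp] theorem inr_ne_center (j : Fin n) : (.inr j : Fin 1 ⊕ Fin n) ≠ center := Sum.inr_ne_inl

@[simp] theorem star_adj_center {u : Fin 1 ⊕ Fin n} : (star n).Adj center u ↔ u.isRight := by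
  cases u <;> simp

@[simp] theorem star_adj_inr {j : Fin n} {u : Fin 1 ⊕ Fin n} :
    (star n).Adj (.inr j) u ↔ u = center := by
  cases u <;> simp

theorem deg_center : deg (star n) center = n :=
  calc deg (star n) center = #(univ.map .inr) := by
        rw [deg]; congr 1; ext (_ | _) <;> simp
    _ = n := by simp

theorem deg_inr (j : Fin n) : deg (star n) (.inr j) = 1 := by
  rw [deg, card_eq_one]
  exact ⟨center, by ext (a | _) <;> simp⟩

theorem nbr_center : nbr (star n) center l = #{j : Fin n | .inr j ∈ l} :=
  calc nbr (star n) center l = #(({j : Fin n | .inr j ∈ l} : Finset _).map .inr) := by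
        rw [nbr]; congr 1; ext (_ | _) <;> simp
    _ = #{j : Fin n | .inr j ∈ l} := card_map _

theorem nbr_inr_of_center_mem (j : Fin n) (h : center ∈ l) : nbr (star n) (.inr j) l = 1 := by
  rw [nbr, card_eq_one]
  exact ⟨center, by ext (a | _) <;> simp [h]⟩

def brushedLeaves (c : Fin 1 ⊕ Fin n → ℕ) : Finset (Fin n) := {j | c (.inr j) ≠ 0}

def deficit (c : Fin 1 ⊕ Fin n → ℕ) : ℕ := n - (c center + 2 * #(brushedLeaves c))

theorem FiringSeq.inr_ne_zero (h : FiringSeq (star n) c l) (hc : center ∉ l) {j : Fin n}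
    (hj : .inr j ∈ l) : c (.inr j) ≠ 0 := by
  obtain ⟨p, hp, hpj⟩ := List.getElem_of_mem hj
  have := h.deg_le_of_no_earlier_adj hp fun u hu hadj => by
    rw [hpj, star_adj_inr] at hadj
    exact hc (hadj ▸ List.mem_of_mem_take hu)
  rw [hpj, deg_inr] at this
  omega

theorem le_of_cleaned_center (h : Cleaned (star n) c center) :
    n ≤ c center + 2 * #(brushedLeaves c) := by
  obtain ⟨l, hl, hmem⟩ := h
  obtain ⟨i, hi, hci⟩ := List.getElem_of_mem hmem
  have hfire := hl.deg_le hi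
  rw [hci, deg_center, nbr_center] at hfire
  have hearly : #{j : Fin n | .inr j ∈ l.take i} ≤ #(brushedLeaves c) := by
    refine card_le_card fun j hj => ?_
    simp only [brushedLeaves, mem_filter, mem_univ, true_and] at hj ⊢
    exact (hl.take i).inr_ne_zero (hci ▸ hl.getElem_notMem_take hi) hj
  omega

theorem cleaned_inr_of_ne_zero {j : Fin n} (h : c (.inr j) ≠ 0) : Cleaned (star n) c (.inr j) :=
  cleaned_of_deg_le (by rw [deg_inr]; omega)

theorem cleaned_inr_iff (hc : ¬ Cleaned (star n) c center) {j : Fin n} :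
    Cleaned (star n) c (.inr j) ↔ c (.inr j) ≠ 0 := by
  refine ⟨fun ⟨l, hl, hj⟩ => hl.inr_ne_zero (fun hmem => hc ⟨l, hl, hmem⟩) hj,
    cleaned_inr_of_ne_zero⟩

theorem cleaned_center_iff : Cleaned (star n) c center ↔ deficit c = 0 := by
  rw [deficit, Nat.sub_eq_zero_iff_le]
  refine ⟨le_of_cleaned_center, fun h => ?_⟩
  let leaves : List (Fin 1 ⊕ Fin n) := (brushedLeaves c).toList.map .inr
  have hleaves : FiringSeq (star n) c leaves := by
    refine firingSeq_of_forall_deg_le ((nodup_toList _).map Sum.inr_injective) fun u hu => ?_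
    obtain ⟨j, hj, rfl⟩ := List.mem_map.1 hu
    simp only [mem_toList, brushedLeaves, mem_filter, mem_univ, true_and] at hj
    rw [deg_inr]
    omega
  have hnbr : nbr (star n) center leaves = #(brushedLeaves c) := by
    rw [nbr_center]
    congr 1
    ext j
    simp [leaves]
  refine ⟨leaves ++ [center], hleaves.append_singleton (by simp [leaves]) ?_, by simp⟩
  rwa [deg_center, hnbr]

theorem over_iff_cleaned_center : Over (star n) c ↔ Cleaned (star n) c center := by
  refine ⟨fun h => h center, fun ⟨l, hl, hcl⟩ v => ?_⟩
  rcases v with a | j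
  · rwa [inl_eq_center]
  by_cases hj : .inr j ∈ l
  · exact ⟨l, hl, hj⟩
  refine ⟨l ++ [.inr j], hl.append_singleton hj ?_, by simp⟩
  rw [deg_inr, nbr_inr_of_center_mem j hcl]
  omega

theorem over_iff_deficit_eq_zero : Over (star n) c ↔ deficit c = 0 :=
  over_iff_cleaned_center.trans cleaned_center_iff

theorem exists_inr_eq_zero (hc : deficit c ≠ 0) : ∃ j : Fin n, c (.inr j) = 0 := by
  by_contra! hall
  have : brushedLeaves c = univ := eq_univ_of_forall fun j => by simp [brushedLeaves, hall j]
  rw [deficit, this, card_univ, Fintype.card_fin] at hc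
  omega

theorem le_fuel_star (n : ℕ) : n ≤ fuel (star n) :=
  (deg_center (n := n)).symm.trans_le (deg_lt_fuel center).le

theorem deficit_zero : deficit (fun _ : Fin 1 ⊕ Fin n => 0) = n := by
  simp [deficit, brushedLeaves]

theorem deficit_addBrush_center : deficit (addBrush c center) = deficit c - 1 := by
  have : brushedLeaves (addBrush c center) = brushedLeaves c := by
    ext j
    simp [brushedLeaves, addBrush_of_ne (inr_ne_center j)]
  rw [deficit, deficit, this, addBrush_self]
  omega

theorem deficit_addBrush_inr {j : Fin n} (hj : c (.inr j) = 0) :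
    deficit (addBrush c (.inr j)) = deficit c - 2 := by
  have : brushedLeaves (addBrush c (.inr j)) = insert j (brushedLeaves c) := by
    ext i
    by_cases hij : i = j
    · simp [brushedLeaves, hij]
    · simp [brushedLeaves, hij, addBrush_of_ne (Sum.inr_injective.ne hij)]
  rw [deficit, deficit, this, card_insert_of_notMem (by simp [brushedLeaves, hj]),
    addBrush_of_ne (inr_ne_center j).symm]
  omega

theorem moveValues_star {mover : Bool} {F : ℕ} {φ : ℕ → ℕ}
    (hval : ∀ c', deficit c' ≤ F → val (star n) mover F c' = φ (deficit c'))
    (hc : deficit c ≠ 0) (hF : deficit c ≤ F + 1) :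
    moveValues (star n) mover F c = {φ (deficit c - 1), φ (deficit c - 2)} := by
  have hcenter : val (star n) mover F (addBrush c center) = φ (deficit c - 1) := by
    rw [hval _ (by rw [deficit_addBrush_center]; omega), deficit_addBrush_center]
  have hleaf {j : Fin n} (hj : c (.inr j) = 0) :
      val (star n) mover F (addBrush c (.inr j)) = φ (deficit c - 2) := by
    rw [hval _ (by rw [deficit_addBrush_inr hj]; omega), deficit_addBrush_inr hj]
  have hdirty : ¬ Cleaned (star n) c center := mt cleaned_center_iff.1 hc
  ext k
  constructor
  · rintro ⟨a | j, hv, rfl⟩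
    · exact .inl (by rw [inl_eq_center, hcenter])
    · exact .inr (hleaf (not_not.1 (mt cleaned_inr_of_ne_zero hv)))
  · rintro (rfl | rfl)
    · exact ⟨center, hdirty, hcenter.symm⟩
    · obtain ⟨j, hj⟩ := exists_inr_eq_zero hc
      exact ⟨.inr j, by rwa [cleaned_inr_iff hdirty, not_not], (hleaf hj).symm⟩

theorem val_star (F : ℕ) (c : Fin 1 ⊕ Fin n → ℕ) (hF : deficit c ≤ F) :
    val (star n) true F c = (2 * deficit c + 1) / 3 ∧
      val (star n) false F c = (2 * deficit c + 2) / 3 := by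
  induction F generalizing c with
  | zero => simp [val, Nat.le_zero.1 hF]
  | succ F ih =>
    by_cases hc : deficit c = 0
    · simp [val_succ_of_over _ _ (over_iff_deficit_eq_zero.2 hc), hc]
    have hover := mt over_iff_deficit_eq_zero.1 hc
    rw [val_true_succ _ hover, val_false_succ _ hover,
      moveValues_star (φ := fun r => (2 * r + 2) / 3) (fun c' h => (ih c' h).2) hc hF,
      moveValues_star (φ := fun r => (2 * r + 1) / 3) (fun c' h => (ih c' h).1) hc hF,
      csInf_pair, csSup_pair]
    omega

end Star

end BrushGame

theorem game_brush_number_star_general (k : ℕ) :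
    BrushGame.bg (completeBipartiteGraph (Fin 1) (Fin (3 * k - 1))) = 2 * k - 1 ∧
      BrushGame.bghat (completeBipartiteGraph (Fin 1) (Fin (3 * k - 1))) = 2 * k := by
  obtain ⟨hmin, hmax⟩ := BrushGame.val_star _ (fun _ => 0)
    (BrushGame.deficit_zero.trans_le (BrushGame.le_fuel_star (3 * k - 1)))
  rw [BrushGame.deficit_zero] at hmin hmax
  exact ⟨hmin.trans (by omega), hmax.trans (by omega)⟩

/-- For every positive integer `k`, the star `K_{1,3k−1}` satisfies
`bg(K_{1,3k−1}) = 2k − 1` and `b̂g(K_{1,3k−1}) = 2k`. -/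
theorem game_brush_number_star (k : ℕ) (hk : 1 ≤ k) :
    BrushGame.bg (completeBipartiteGraph (Fin 1) (Fin (3 * k - 1))) = 2 * k - 1 ∧
      BrushGame.bghat (completeBipartiteGraph (Fin 1) (Fin (3 * k - 1))) = 2 * k :=
  game_brush_number_star_general k
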